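/- Let S⁽ⁿ⁾ be the Sylvester matrix of order 2ⁿ. Define ρ⁽ⁿ⁾ = max_{1≤m≤2ⁿ} ∑_{i=1}^{2ⁿ} |∑_{k=1}^m S⁽ⁿ⁾_{k i}|. Then ρ⁽ⁿ⁾ = (3n+7)·2ⁿ/9 + 2·(−1)ⁿ/9 for every n ≥ 1. -/

import Mathlib

/-- The Sylvester matrix of order `2 ^ n`, with rows and columns indexed by
`1, …, 2 ^ n`.  It is defined by the recursion
`S⁽ⁿ⁺¹⁾ = [[S⁽ⁿ⁾, S⁽ⁿ⁾], [S⁽ⁿ⁾, -S⁽ⁿ⁾]]` starting from the `1 × 1` matrix `[1]`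
(so that `S⁽¹⁾ = [[1, 1], [1, -1]]`). -/
def Syl : ℕ → ℕ → ℕ → ℝ
  | 0, _, _ => 1
  | n + 1, k, i =>
    if k ≤ 2 ^ n then
      if i ≤ 2 ^ n then Syl n k i else Syl n k (i - 2 ^ n)
    else
      if i ≤ 2 ^ n then Syl n (k - 2 ^ n) i else -Syl n (k - 2 ^ n) (i - 2 ^ n)

/-!
Write `G n m` (`partialColSumNorm n m`) for the `ℓ₁`-norm of the sum of the first `m` rows of
`S⁽ⁿ⁾`. The block structure of `S⁽ⁿ⁺¹⁾` gives `G (n+1) m = 2 G n m` for `m ≤ 2ⁿ`, and, since the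
full column sums of `S⁽ⁿ⁾` are `2ⁿ` in the first column and `0` elsewhere,
`G (n+1) (2ⁿ + r) = 2ⁿ⁺¹ + 2 (G n r - r)`. So the maximum of `G (n+1)` involves the maximum of
`G n m - m`, which in turn involves that of `G n m - 3m/2`; these three quantities are bounded by
explicit closed forms simultaneously by induction, and the bound for `G` is attained at a row
index given by a Jacobsthal-type recursion.
-/

open Finset

theorem Finset.sum_Icc_one_add {M : Type*} [AddCommMonoid M] (f : ℕ → M) (a b : ℕ) :
    ∑ i ∈ Icc 1 (a + b), f i = ∑ i ∈ Icc 1 a, f i + ∑ j ∈ Icc 1 b, f (a + j) := by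
  induction b with
  | zero => simp
  | succ b ih =>
    rw [← Nat.add_assoc, sum_Icc_succ_top (Nat.le_add_left 1 _),
      sum_Icc_succ_top (Nat.le_add_left 1 _), ih, Nat.add_assoc, add_assoc]

namespace Sylvester

variable {n k i m r : ℕ}

theorem Syl_succ_of_le (hk : k ≤ 2 ^ n) (hi : i ≤ 2 ^ n) : Syl (n + 1) k i = Syl n k i := by
  simp [Syl, hk, hi]

theorem Syl_succ_add_right (hk : k ≤ 2 ^ n) (hi : 0 < i) :
    Syl (n + 1) k (2 ^ n + i) = Syl n k i := by
  simp [Syl, hk, hi.ne']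

theorem Syl_succ_add_left (hk : 0 < k) (hi : i ≤ 2 ^ n) :
    Syl (n + 1) (2 ^ n + k) i = Syl n k i := by
  simp [Syl, hk.ne', hi]

theorem Syl_succ_add_add (hk : 0 < k) (hi : 0 < i) :
    Syl (n + 1) (2 ^ n + k) (2 ^ n + i) = -Syl n k i := by
  simp [Syl, hk.ne', hi.ne']

theorem Syl_one_right (n k : ℕ) : Syl n k 1 = 1 := by
  induction n generalizing k with
  | zero => rfl
  | succ n ih => by_cases hk : k ≤ 2 ^ n <;> simp [Syl, hk, Nat.one_le_two_pow, ih]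

noncomputable def partialColSum (n m i : ℕ) : ℝ := ∑ k ∈ Icc 1 m, Syl n k i

noncomputable def partialColSumNorm (n m : ℕ) : ℝ :=
  ∑ i ∈ Icc 1 (2 ^ n), |partialColSum n m i|

theorem partialColSum_one (n m : ℕ) : partialColSum n m 1 = m := by
  simp [partialColSum, Syl_one_right]

theorem partialColSum_succ_of_le (hm : m ≤ 2 ^ n) (hi : i ≤ 2 ^ n) :
    partialColSum (n + 1) m i = partialColSum n m i :=
  sum_congr rfl fun _ hk => Syl_succ_of_le ((mem_Icc.mp hk).2.trans hm) hi

theorem partialColSum_succ_of_le_add (hm : m ≤ 2 ^ n) (hi : 0 < i) :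
    partialColSum (n + 1) m (2 ^ n + i) = partialColSum n m i :=
  sum_congr rfl fun _ hk => Syl_succ_add_right ((mem_Icc.mp hk).2.trans hm) hi

theorem partialColSum_succ_add (hi : i ≤ 2 ^ n) :
    partialColSum (n + 1) (2 ^ n + r) i = partialColSum n (2 ^ n) i + partialColSum n r i := by
  rw [partialColSum, sum_Icc_one_add]
  congr 1
  · exact sum_congr rfl fun k hk => Syl_succ_of_le (mem_Icc.mp hk).2 hi
  · exact sum_congr rfl fun k hk => Syl_succ_add_left (mem_Icc.mp hk).1 hi

theorem partialColSum_succ_add_add (hi : 0 < i) :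
    partialColSum (n + 1) (2 ^ n + r) (2 ^ n + i) =
      partialColSum n (2 ^ n) i - partialColSum n r i := by
  unfold partialColSum
  rw [sum_Icc_one_add, sub_eq_add_neg, ← sum_neg_distrib]
  congr 1
  · exact sum_congr rfl fun k hk => Syl_succ_add_right (mem_Icc.mp hk).2 hi
  · exact sum_congr rfl fun k hk => Syl_succ_add_add (mem_Icc.mp hk).1 hi

theorem partialColSum_two_pow (hi₀ : 0 < i) (hi : i ≤ 2 ^ n) :
    partialColSum n (2 ^ n) i = if i = 1 then 2 ^ n else 0 := by
  induction n generalizing i with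
  | zero => simp [show i = 1 by omega, partialColSum, Syl]
  | succ n ih =>
    rw [pow_succ, mul_two] at hi ⊢
    by_cases hin : i ≤ 2 ^ n
    · rw [partialColSum_succ_add hin, ih hi₀ hin]
      split_ifs <;> ring
    · obtain ⟨j, rfl⟩ : ∃ j, i = 2 ^ n + j := ⟨i - 2 ^ n, by omega⟩
      rw [partialColSum_succ_add_add (by omega), sub_self, if_neg (by omega)]

theorem partialColSumNorm_succ_of_le (hm : m ≤ 2 ^ n) :
    partialColSumNorm (n + 1) m = 2 * partialColSumNorm n m := by
  rw [partialColSumNorm, pow_succ, mul_two, sum_Icc_one_add, two_mul, partialColSumNorm]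
  congr 1 <;> refine sum_congr rfl fun i hi => ?_
  · rw [partialColSum_succ_of_le hm (mem_Icc.mp hi).2]
  · rw [partialColSum_succ_of_le_add hm (mem_Icc.mp hi).1]

theorem partialColSumNorm_succ_add (hr : r ≤ 2 ^ n) :
    partialColSumNorm (n + 1) (2 ^ n + r) = 2 ^ (n + 1) + 2 * (partialColSumNorm n r - r) := by
  have hcol : ∀ i ∈ Icc 1 (2 ^ n),
      |partialColSum (n + 1) (2 ^ n + r) i| + |partialColSum (n + 1) (2 ^ n + r) (2 ^ n + i)| =
        2 * |partialColSum n r i| + if 1 = i then (2 : ℝ) ^ (n + 1) - 2 * r else 0 := by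
    intro i hi
    obtain ⟨hi₀, hin⟩ := mem_Icc.mp hi
    rw [partialColSum_succ_add hin, partialColSum_succ_add_add hi₀,
      partialColSum_two_pow hi₀ hin]
    by_cases h1 : i = 1
    · subst h1
      have hr' : (r : ℝ) ≤ 2 ^ n := by exact_mod_cast hr
      simp only [if_true, partialColSum_one]
      rw [abs_of_nonneg (by positivity), abs_of_nonneg (by linarith), Nat.abs_cast]
      ring
    · simp [h1, Ne.symm h1, two_mul]
  rw [partialColSumNorm, pow_succ 2 n, mul_two, sum_Icc_one_add, ← sum_add_distrib,
    sum_congr rfl hcol, sum_add_distrib, ← mul_sum, sum_ite_eq,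
    if_pos (by simp [Nat.one_le_two_pow]), partialColSumNorm]
  ring

/-- Upper bounds for `G n m`, `G n m - m` and `G n m - 3m/2` over `1 ≤ m ≤ 2ⁿ` (the first two are
the exact maxima); they solve the recurrences that the block recursion for `G` imposes. -/
noncomputable def normBound (n : ℕ) : ℝ := ((3 * n + 7) * 2 ^ n) / 9 + 2 * (-1) ^ n / 9

noncomputable def normSubBound (n : ℕ) : ℝ := ((3 * n + 1) * 2 ^ n - (-1) ^ n) / 9

noncomputable def normSubThreeHalvesBound (n : ℕ) : ℝ := ((6 * n - 1) * 2 ^ n + (-1) ^ n) / 18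

theorem normBound_succ (n : ℕ) : normBound (n + 1) = 2 ^ (n + 1) + 2 * normSubBound n := by
  simp only [normBound, normSubBound]; push_cast; ring

theorem normSubBound_succ (n : ℕ) : normSubBound (n + 1) = normBound n + normSubBound n := by
  simp only [normBound, normSubBound]; push_cast; ring

theorem normSubBound_succ' (n : ℕ) :
    normSubBound (n + 1) = 2 ^ n + 2 * normSubThreeHalvesBound n := by
  simp only [normSubBound, normSubThreeHalvesBound]; push_cast; ring

theorem normSubThreeHalvesBound_succ (n : ℕ) :
    normSubThreeHalvesBound (n + 1) = 3 / 2 * normSubBound n + normBound n / 2 := by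
  simp only [normSubBound, normSubThreeHalvesBound, normBound]; push_cast; ring

theorem two_mul_normBound_le (n : ℕ) : 2 * normBound n ≤ normBound (n + 1) := by
  have h : (-1 : ℝ) ^ n ≤ 2 ^ n := by
    calc (-1 : ℝ) ^ n ≤ 1 := (le_abs_self _).trans (abs_neg_one_pow n).le
      _ ≤ 2 ^ n := one_le_pow₀ one_le_two
  simp only [normBound]; push_cast
  linear_combination (2 / 3) * h

theorem normSubThreeHalvesBound_succ_ge (n : ℕ) :
    2 ^ n / 2 + 2 * normSubThreeHalvesBound n - 1 / 2 ≤ normSubThreeHalvesBound (n + 1) := by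
  have h : (-1 : ℝ) ^ n ≤ 1 := (le_abs_self _).trans (abs_neg_one_pow n).le
  have h2 : (0 : ℝ) ≤ 2 ^ n := by positivity
  simp only [normSubThreeHalvesBound]; push_cast
  linear_combination (1 / 6) * h + (1 / 6) * h2

theorem partialColSumNorm_le (n : ℕ) (hm₀ : 0 < m) (hm : m ≤ 2 ^ n) :
    partialColSumNorm n m ≤ normBound n ∧ partialColSumNorm n m ≤ normSubBound n + m ∧
      partialColSumNorm n m ≤ normSubThreeHalvesBound n + 3 / 2 * m := by
  induction n generalizing m with
  | zero =>
    obtain rfl : m = 1 := by omega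
    norm_num [partialColSumNorm, partialColSum, Syl, normBound, normSubBound,
      normSubThreeHalvesBound]
  | succ n ih =>
    by_cases hmn : m ≤ 2 ^ n
    · obtain ⟨hA, hB, hC⟩ := ih hm₀ hmn
      rw [partialColSumNorm_succ_of_le hmn]
      refine ⟨?_, ?_, ?_⟩
      · linarith [two_mul_normBound_le n]
      · linarith [normSubBound_succ n]
      · linarith [normSubThreeHalvesBound_succ n]
    · obtain ⟨r, rfl⟩ : ∃ r, m = 2 ^ n + r := ⟨m - 2 ^ n, by omega⟩
      have hr : r ≤ 2 ^ n := by rw [pow_succ] at hm; omega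
      have hr₁ : (1 : ℝ) ≤ r := by exact_mod_cast (show 1 ≤ r by omega)
      obtain ⟨hA, hB, hC⟩ := ih (by omega) hr
      rw [partialColSumNorm_succ_add hr]
      push_cast
      refine ⟨?_, ?_, ?_⟩
      · linarith [normBound_succ n]
      · linarith [normSubBound_succ' n, pow_succ (2 : ℝ) n]
      · linarith [normSubThreeHalvesBound_succ_ge n, pow_succ (2 : ℝ) n]

/-- `(p n, q n)` with `G n (p n)` and `G n (q n) - q n` maximal. -/
def maximizingRows : ℕ → ℕ × ℕ
  | 0 => (1, 0)
  | n + 1 => (2 ^ n + (maximizingRows n).2, (maximizingRows n).1)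

theorem maximizingRows_fst_add_snd (n : ℕ) :
    (maximizingRows n).1 + (maximizingRows n).2 = 2 ^ n := by
  induction n with
  | zero => rfl
  | succ n ih => simp only [maximizingRows, pow_succ]; omega

theorem maximizingRows_fst_pos (n : ℕ) : 0 < (maximizingRows n).1 := by
  cases n <;> simp [maximizingRows]

theorem maximizingRows_fst_eq (n : ℕ) :
    ((maximizingRows n).1 : ℝ) = normBound n - normSubBound n := by
  induction n with
  | zero => norm_num [maximizingRows, normBound, normSubBound]
  | succ n ih =>
    have hsum : ((maximizingRows n).1 : ℝ) + (maximizingRows n).2 = 2 ^ n := by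
      exact_mod_cast maximizingRows_fst_add_snd n
    simp only [maximizingRows]
    push_cast
    rw [normBound_succ, normSubBound_succ, pow_succ]
    linarith

theorem partialColSumNorm_maximizingRows (n : ℕ) :
    partialColSumNorm n (maximizingRows n).1 = normBound n ∧
      partialColSumNorm n (maximizingRows n).2 = normSubBound n + (maximizingRows n).2 := by
  induction n with
  | zero =>
    norm_num [maximizingRows, partialColSumNorm, partialColSum, Syl, normBound, normSubBound]
  | succ n ih =>
    have hsum := maximizingRows_fst_add_snd n
    simp only [maximizingRows]
    rw [partialColSumNorm_succ_add (by omega), ih.2, normBound_succ,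
      partialColSumNorm_succ_of_le (by omega), ih.1, maximizingRows_fst_eq, normSubBound_succ]
    constructor <;> ring

end Sylvester

/-- `ρ⁽ⁿ⁾ = max_{1 ≤ m ≤ 2^n} ∑_{i=1}^{2^n} |∑_{k=1}^m S⁽ⁿ⁾_{k i}|` (the value
of `ρ⁽ⁿ⁾` in `l₁` with respect to the natural basis) equals
`(3n + 7)·2ⁿ/9 + 2·(−1)ⁿ/9`. -/
theorem sylvester_rho_l1 (n : ℕ) :
    ((Finset.Icc 1 (2 ^ n)).sup' ⟨1, by simp [Nat.one_le_two_pow]⟩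
        fun m => ∑ i ∈ Finset.Icc 1 (2 ^ n), |∑ k ∈ Finset.Icc 1 m, Syl n k i|) =
      ((3 * n + 7) * 2 ^ n) / 9 + 2 * (-1 : ℝ) ^ n / 9 := by
  open Sylvester in
  have hrow : (maximizingRows n).1 ∈ Icc 1 (2 ^ n) :=
    mem_Icc.mpr ⟨maximizingRows_fst_pos n, by have := maximizingRows_fst_add_snd n; omega⟩
  refine le_antisymm (sup'_le _ _ fun m hm => ?_) ?_
  · exact (partialColSumNorm_le n (mem_Icc.mp hm).1 (mem_Icc.mp hm).2).1
  · exact le_sup'_of_le _ hrow (partialColSumNorm_maximizingRows n).1.ge
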